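/- arXiv:2003.01647 — 2 statements merged into one kernel-verified Lean document; each statement's English description precedes it below -/
import Mathlib

section
/- Two n × n × n alternating sign hypermatrices A and B satisfy L(A) = L(B) if and only if A − B can be expressed as a sum of pairs of T-blocks, where in each pair the two T-blocks have opposite depth and occupy the same pair of vertical-line positions. -/
open Finset

/-- The nonzero entries of the sequence `f`, in order. -/
def nonzeroList {n : ℕ} (f : Fin n → ℤ) : List ℤ :=
  ((List.finRange n).map f).filter (· != 0)

/-- The nonzero entries of `f` alternate in sign, beginning and ending with `+1`. -/
def AltLine {n : ℕ} (f : Fin n → ℤ) : Prop :=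
  nonzeroList f ≠ [] ∧
  (∀ i : ℕ, ∀ h : i < (nonzeroList f).length,
      (nonzeroList f).get ⟨i, h⟩ = (-1 : ℤ) ^ i) ∧
  (nonzeroList f).getLast? = some 1

/-- Alternating sign matrix. -/
def IsASM {n : ℕ} (M : Fin n → Fin n → ℤ) : Prop :=
  (∀ i, AltLine (fun j => M i j)) ∧ (∀ j, AltLine (fun i => M i j))

/-- Alternating sign hypermatrix. -/
def IsASHM {n : ℕ} (A : Fin n → Fin n → Fin n → ℤ) : Prop :=
  (∀ j k, AltLine (fun i => A i j k)) ∧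
  (∀ i k, AltLine (fun j => A i j k)) ∧
  (∀ i j, AltLine (fun k => A i j k))

/-- The ASHL of an ASHM: `L(A)_{ij} = ∑ k·a_{ijk}` (planes indexed `1,…,n`). -/
def ashl {n : ℕ} (A : Fin n → Fin n → Fin n → ℤ) (i j : Fin n) : ℤ :=
  ∑ k : Fin n, ((k : ℕ) + 1 : ℤ) * A i j k

def tsign {n : ℕ} (a b x : Fin n) : ℤ :=
  if x = a then 1 else if x = b then -1 else 0

/-- The T-block `T_{i₁,j₁,k₁ : i₂,j₂,k₂}`. -/
def Tblock {n : ℕ} (i₁ i₂ j₁ j₂ k₁ k₂ : Fin n) (i j k : Fin n) : ℤ :=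
  tsign i₁ i₂ i * tsign j₁ j₂ j * tsign k₁ k₂ k

/-!
Everything depends only on `D = A - B`, whose line sums vanish because an alternating line
sums to `1`; `L` is additive and kills every opposite-depth pair, hence all their sums.
Conversely, pivoting at index `0`, a `D` with zero line sums and `L(D) = 0` is the integer
combination `∑ D_{xyz} (e_x - e_0) ⊗ (e_y - e_0) ⊗ (e_z - e_0 - z (e_1 - e_0))`, and in `z`
each of these tensors telescopes into pairs `T_{0,0,0 : x,y,1} - T_{0,0,z : x,y,z+1}` of
depth-one T-blocks. Sums of pairs are closed under negation, so they form the additive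
subgroup generated by the pairs.
-/

theorem AltLine.sum_eq_one {n : ℕ} {f : Fin n → ℤ} (h : AltLine f) : ∑ i, f i = 1 := by
  obtain ⟨hne, hget, hlast⟩ := h
  set l := nonzeroList f
  have hsum : ∑ i, f i = l.sum := by
    rw [Fin.sum_univ_def, ← List.sum_filter_bne_zero]
    rfl
  have hl : l = List.ofFn fun i : Fin l.length => (-1 : ℤ) ^ (i : ℕ) :=
    List.ext_get (by simp) fun i h _ => by simpa using hget i h
  have hodd : ¬ Even l.length := by
    have hlen : 0 < l.length := List.length_pos_iff.mpr hne
    rw [List.getLast?_eq_getElem?, List.getElem?_eq_getElem (by omega), Option.some_inj,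
      ← List.get_eq_getElem (l := l) (i := ⟨_, by omega⟩), hget,
      neg_one_pow_eq_one_iff_even (by norm_num)] at hlast
    rw [← Nat.sub_add_cancel hlen]
    exact Nat.not_even_iff_odd.mpr hlast.add_one
  rw [hsum, hl, List.sum_ofFn, Fin.sum_univ_eq_sum_range (fun i => (-1 : ℤ) ^ i),
    neg_one_geom_sum, if_neg hodd]

section Vectors

variable {n : ℕ}

/-- Indexed by `ℕ` rather than `Fin n`; `unitVec k = 0` when `n ≤ k`. -/
def unitVec (k : ℕ) (c : Fin n) : ℤ := if (c : ℕ) = k then 1 else 0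

theorem sum_mul_unitVec (f : Fin n → ℤ) (a : Fin n) :
    ∑ x : Fin n, f x * unitVec x a = f a := by
  simp [unitVec, Fin.val_inj]

theorem tsign_eq_unitVec_sub {a b : Fin n} (hab : a ≠ b) (c : Fin n) :
    tsign a b c = unitVec a c - unitVec b c := by
  unfold tsign unitVec
  by_cases ha : c = a <;> by_cases hb : c = b <;> simp_all [Fin.val_inj]

theorem sum_succ_mul_tsign {a b : Fin n} (hab : a ≠ b) :
    ∑ c : Fin n, ((c : ℕ) + 1 : ℤ) * tsign a b c = ((a : ℕ) : ℤ) - ((b : ℕ) : ℤ) := by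
  simp [tsign_eq_unitVec_sub hab, unitVec, mul_sub, Fin.val_inj]

theorem sum_mul_sub_unitVec_zero (f : Fin n → ℤ) (a : Fin n) :
    ∑ x : Fin n, f x * (unitVec x a - unitVec 0 a) = f a - (∑ x, f x) * unitVec 0 a := by
  rw [← sum_mul_unitVec f a]
  simp only [mul_sub, Finset.sum_sub_distrib, Finset.sum_mul]

/-- The correction on `{0, 1}` makes both the sum and the first moment vanish. -/
def balancedVec (z : ℕ) (c : Fin n) : ℤ :=
  unitVec z c - unitVec 0 c - z * (unitVec 1 c - unitVec 0 c)

theorem sum_mul_balancedVec (f : Fin n → ℤ) (c : Fin n) :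
    ∑ z : Fin n, f z * balancedVec z c =
      f c - (∑ z, f z) * unitVec 0 c -
        (∑ z : Fin n, ((z : ℕ) : ℤ) * f z) * (unitVec 1 c - unitVec 0 c) := by
  rw [← sum_mul_unitVec f c]
  simp only [balancedVec, mul_sub, Finset.sum_sub_distrib, Finset.sum_mul, mul_assoc,
    mul_left_comm (f _)]

end Vectors

section Hypermatrices

variable {n : ℕ}

def HasZeroLineSums (D : Fin n → Fin n → Fin n → ℤ) : Prop :=
  (∀ j k, ∑ i, D i j k = 0) ∧ (∀ i k, ∑ j, D i j k = 0) ∧ (∀ i j, ∑ k, D i j k = 0)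

theorem IsASHM.hasZeroLineSums_sub {A B : Fin n → Fin n → Fin n → ℤ} (hA : IsASHM A)
    (hB : IsASHM B) : HasZeroLineSums (A - B) := by
  refine ⟨fun j k => ?_, fun i k => ?_, fun i j => ?_⟩ <;>
    simp only [Pi.sub_apply, Finset.sum_sub_distrib]
  · rw [(hA.1 j k).sum_eq_one, (hB.1 j k).sum_eq_one, sub_self]
  · rw [(hA.2.1 i k).sum_eq_one, (hB.2.1 i k).sum_eq_one, sub_self]
  · rw [(hA.2.2 i j).sum_eq_one, (hB.2.2 i j).sum_eq_one, sub_self]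

def ashlHom (n : ℕ) : (Fin n → Fin n → Fin n → ℤ) →+ (Fin n → Fin n → ℤ) :=
  AddMonoidHom.mk' ashl fun A B => by
    funext i j
    simp [ashl, mul_add, Finset.sum_add_distrib]

theorem ashl_sub (A B : Fin n → Fin n → Fin n → ℤ) : ashl (A - B) = ashl A - ashl B :=
  map_sub (ashlHom n) A B

theorem ashl_Tblock (i₁ i₂ j₁ j₂ : Fin n) {k₁ k₂ : Fin n} (hk : k₁ ≠ k₂) :
    ashl (Tblock i₁ i₂ j₁ j₂ k₁ k₂) =
      fun i j => tsign i₁ i₂ i * tsign j₁ j₂ j * (((k₁ : ℕ) : ℤ) - ((k₂ : ℕ) : ℤ)) := by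
  funext i j
  rw [← sum_succ_mul_tsign hk, Finset.mul_sum]
  exact Finset.sum_congr rfl fun k _ => by simp only [Tblock]; ring

def basisTensor (x y : Fin n) (z : ℕ) : Fin n → Fin n → Fin n → ℤ :=
  fun a b c => (unitVec x a - unitVec 0 a) * (unitVec y b - unitVec 0 b) * balancedVec z c

theorem HasZeroLineSums.eq_sum_basisTensor {D : Fin n → Fin n → Fin n → ℤ}
    (hD : HasZeroLineSums D) (hL : ashl D = 0) :
    D = ∑ x : Fin n, ∑ y : Fin n, ∑ z : Fin n, D x y z • basisTensor x y z := by
  obtain ⟨hi, hj, hk⟩ := hD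
  have hm : ∀ x y, ∑ z : Fin n, ((z : ℕ) : ℤ) * D x y z = 0 := fun x y => by
    simpa [ashl, add_mul, Finset.sum_add_distrib, hk] using congrFun (congrFun hL x) y
  funext a b c
  simp only [Finset.sum_apply, Pi.smul_apply, smul_eq_mul, basisTensor]
  calc D a b c = ∑ x, D x b c * (unitVec x a - unitVec 0 a) := by
        rw [sum_mul_sub_unitVec_zero, hi, zero_mul, sub_zero]
    _ = ∑ x, (∑ y, D x y c * (unitVec y b - unitVec 0 b)) * (unitVec x a - unitVec 0 a) := by
        simp [sum_mul_sub_unitVec_zero, hj]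
    _ = ∑ x, (∑ y, (∑ z, D x y z * balancedVec z c) * (unitVec y b - unitVec 0 b)) *
          (unitVec x a - unitVec 0 a) := by
        simp [sum_mul_balancedVec, hk, hm]
    _ = _ := by
        simp only [Finset.sum_mul]
        exact Finset.sum_congr rfl fun x _ => Finset.sum_congr rfl fun y _ =>
          Finset.sum_congr rfl fun z _ => by ring

end Hypermatrices

section Pairs

variable {n : ℕ}

def IsOppositeDepthPair (P : Fin n → Fin n → Fin n → ℤ) : Prop :=
  ∃ (i₁ i₂ j₁ j₂ : Fin n) (ε ε' : ℤ) (k₁ k₂ k₁' k₂' : Fin n),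
    (i₁ < i₂ ∧ j₁ < j₂ ∧ k₁ < k₂ ∧ k₁' < k₂' ∧
      (ε = 1 ∨ ε = -1) ∧ (ε' = 1 ∨ ε' = -1) ∧
      ε * (((k₂ : ℕ) : ℤ) - ((k₁ : ℕ) : ℤ)) = -(ε' * (((k₂' : ℕ) : ℤ) - ((k₁' : ℕ) : ℤ)))) ∧
    P = fun i j k => ε * Tblock i₁ i₂ j₁ j₂ k₁ k₂ i j k + ε' * Tblock i₁ i₂ j₁ j₂ k₁' k₂' i j k

theorem IsOppositeDepthPair.neg {P : Fin n → Fin n → Fin n → ℤ} (h : IsOppositeDepthPair P) :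
    IsOppositeDepthPair (-P) := by
  obtain ⟨i₁, i₂, j₁, j₂, ε, ε', k₁, k₂, k₁', k₂', ⟨hi, hj, hk, hk', hε, hε', hdepth⟩, rfl⟩ := h
  refine ⟨i₁, i₂, j₁, j₂, -ε, -ε', k₁, k₂, k₁', k₂',
    ⟨hi, hj, hk, hk', by omega, by omega, by linear_combination -hdepth⟩, ?_⟩
  funext i j k
  simp only [Pi.neg_apply]
  ring

theorem IsOppositeDepthPair.ashl_eq_zero {P : Fin n → Fin n → Fin n → ℤ}
    (h : IsOppositeDepthPair P) : ashl P = 0 := by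
  obtain ⟨i₁, i₂, j₁, j₂, ε, ε', k₁, k₂, k₁', k₂', ⟨-, -, hk, hk', -, -, hdepth⟩, rfl⟩ := h
  change ashlHom n (ε • Tblock i₁ i₂ j₁ j₂ k₁ k₂ + ε' • Tblock i₁ i₂ j₁ j₂ k₁' k₂') = 0
  funext i j
  simp only [map_add, map_zsmul, Pi.add_apply, Pi.smul_apply, smul_eq_mul, ashlHom,
    AddMonoidHom.mk'_apply, ashl_Tblock _ _ _ _ hk.ne, ashl_Tblock _ _ _ _ hk'.ne, Pi.zero_apply]
  linear_combination (-(tsign i₁ i₂ i * tsign j₁ j₂ j)) * hdepth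

def pairSpan (n : ℕ) : AddSubgroup (Fin n → Fin n → Fin n → ℤ) :=
  AddSubgroup.closure {P | IsOppositeDepthPair P}

theorem ashl_eq_zero_of_mem_pairSpan {D : Fin n → Fin n → Fin n → ℤ} (hD : D ∈ pairSpan n) :
    ashl D = 0 :=
  (AddSubgroup.closure_le (ashlHom n).ker).mpr (fun _ hP => hP.ashl_eq_zero) hD

theorem pairSpan_toAddSubmonoid (n : ℕ) :
    (pairSpan n).toAddSubmonoid = AddSubmonoid.closure {P | IsOppositeDepthPair P} := by
  rw [pairSpan, AddSubgroup.closure_toAddSubmonoid, Set.union_eq_left.mpr]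
  intro P hP
  simpa using (show IsOppositeDepthPair (-P) from hP).neg

theorem mem_pairSpan_iff (D : Fin n → Fin n → Fin n → ℤ) :
    D ∈ pairSpan n ↔
      ∃ (m : ℕ) (i₁ i₂ j₁ j₂ : Fin m → Fin n)
        (ε ε' : Fin m → ℤ) (k₁ k₂ k₁' k₂' : Fin m → Fin n),
        (∀ t, i₁ t < i₂ t ∧ j₁ t < j₂ t ∧ k₁ t < k₂ t ∧ k₁' t < k₂' t ∧
          (ε t = 1 ∨ ε t = -1) ∧ (ε' t = 1 ∨ ε' t = -1) ∧
          ε t * (((k₂ t : ℕ) : ℤ) - ((k₁ t : ℕ) : ℤ)) =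
            -(ε' t * (((k₂' t : ℕ) : ℤ) - ((k₁' t : ℕ) : ℤ)))) ∧
        ∀ i j k, D i j k =
          ∑ t, (ε t * Tblock (i₁ t) (i₂ t) (j₁ t) (j₂ t) (k₁ t) (k₂ t) i j k +
            ε' t * Tblock (i₁ t) (i₂ t) (j₁ t) (j₂ t) (k₁' t) (k₂' t) i j k) := by
  constructor
  · intro hD
    rw [← AddSubgroup.mem_toAddSubmonoid, pairSpan_toAddSubmonoid] at hD
    obtain ⟨l, hl, rfl⟩ := AddSubmonoid.exists_list_of_mem_closure hD
    choose i₁ i₂ j₁ j₂ ε ε' k₁ k₂ k₁' k₂' hvalid hP using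
      fun t : Fin l.length => hl _ (List.get_mem l t)
    refine ⟨l.length, i₁, i₂, j₁, j₂, ε, ε', k₁, k₂, k₁', k₂', hvalid, fun i j k => ?_⟩
    conv_lhs => rw [← List.ofFn_get l, List.sum_ofFn]
    simp only [Finset.sum_apply, hP]
  · rintro ⟨m, i₁, i₂, j₁, j₂, ε, ε', k₁, k₂, k₁', k₂', hvalid, hD⟩
    have hsum : D = ∑ t, fun i j k =>
        ε t * Tblock (i₁ t) (i₂ t) (j₁ t) (j₂ t) (k₁ t) (k₂ t) i j k +
          ε' t * Tblock (i₁ t) (i₂ t) (j₁ t) (j₂ t) (k₁' t) (k₂' t) i j k := by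
      funext i j k
      simp only [Finset.sum_apply, hD]
    rw [hsum]
    exact sum_mem fun t _ =>
      AddSubgroup.subset_closure ⟨_, _, _, _, _, _, _, _, _, _, hvalid t, rfl⟩

end Pairs

section Decomposition

variable {n : ℕ}

theorem isOppositeDepthPair_basisTensor_succ_sub {x y : Fin n} (hx : 0 < (x : ℕ))
    (hy : 0 < (y : ℕ)) {z : ℕ} (hz : z + 1 < n) :
    IsOppositeDepthPair (basisTensor x y (z + 1) - basisTensor x y z) := by
  have hx' : (⟨0, by omega⟩ : Fin n) < x := Fin.lt_def.mpr hx
  have hy' : (⟨0, by omega⟩ : Fin n) < y := Fin.lt_def.mpr hy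
  have h01 : (⟨0, by omega⟩ : Fin n) < ⟨1, by omega⟩ := Fin.lt_def.mpr Nat.one_pos
  have hzz : (⟨z, by omega⟩ : Fin n) < ⟨z + 1, hz⟩ := Fin.lt_def.mpr z.lt_succ_self
  refine ⟨_, _, _, _, 1, -1, _, _, _, _, ⟨hx', hy', h01, hzz, by simp, by simp, by simp⟩, ?_⟩
  funext a b c
  simp only [Tblock, Pi.sub_apply, basisTensor, balancedVec, tsign_eq_unitVec_sub hx'.ne,
    tsign_eq_unitVec_sub hy'.ne, tsign_eq_unitVec_sub h01.ne, tsign_eq_unitVec_sub hzz.ne]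
  push_cast
  ring

theorem basisTensor_mem_pairSpan (x y : Fin n) {z : ℕ} (hz : z < n) :
    basisTensor x y z ∈ pairSpan n := by
  by_cases hxy : (x : ℕ) = 0 ∨ (y : ℕ) = 0
  · have hzero : basisTensor x y z = 0 := by
      funext a b c
      rcases hxy with h | h <;> simp [basisTensor, h]
    exact hzero ▸ zero_mem _
  push Not at hxy
  induction z with
  | zero =>
    have hzero : basisTensor x y 0 = 0 := by
      funext a b c
      simp [basisTensor, balancedVec]
    exact hzero ▸ zero_mem _
  | succ z ih =>
    rw [← sub_add_cancel (basisTensor x y (z + 1)) (basisTensor x y z)]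
    exact add_mem (AddSubgroup.subset_closure <| isOppositeDepthPair_basisTensor_succ_sub
      (Nat.pos_of_ne_zero hxy.1) (Nat.pos_of_ne_zero hxy.2) hz) (ih (by omega))

theorem mem_pairSpan_of_ashl_eq_zero {D : Fin n → Fin n → Fin n → ℤ} (hD : HasZeroLineSums D)
    (hL : ashl D = 0) : D ∈ pairSpan n := by
  rw [hD.eq_sum_basisTensor hL]
  exact sum_mem fun x _ => sum_mem fun y _ => sum_mem fun z _ =>
    AddSubgroup.zsmul_mem _ (basisTensor_mem_pairSpan x y z.isLt) _

end Decomposition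

theorem ashl_eq_iff_opposite_depth_pairs {n : ℕ}
    (A B : Fin n → Fin n → Fin n → ℤ) (hA : IsASHM A) (hB : IsASHM B) :
    ashl A = ashl B ↔
      ∃ (m : ℕ) (i₁ i₂ j₁ j₂ : Fin m → Fin n)
        (ε ε' : Fin m → ℤ) (k₁ k₂ k₁' k₂' : Fin m → Fin n),
        (∀ t, i₁ t < i₂ t ∧ j₁ t < j₂ t ∧ k₁ t < k₂ t ∧ k₁' t < k₂' t ∧
          (ε t = 1 ∨ ε t = -1) ∧ (ε' t = 1 ∨ ε' t = -1) ∧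
          ε t * (((k₂ t : ℕ) : ℤ) - ((k₁ t : ℕ) : ℤ)) =
            -(ε' t * (((k₂' t : ℕ) : ℤ) - ((k₁' t : ℕ) : ℤ)))) ∧
        ∀ i j k, A i j k - B i j k =
          ∑ t, (ε t * Tblock (i₁ t) (i₂ t) (j₁ t) (j₂ t) (k₁ t) (k₂ t) i j k +
            ε' t * Tblock (i₁ t) (i₂ t) (j₁ t) (j₂ t) (k₁' t) (k₂' t) i j k) := by
  refine Iff.trans ?_ (mem_pairSpan_iff (A - B))
  rw [← sub_eq_zero, ← ashl_sub]
  exact ⟨mem_pairSpan_of_ashl_eq_zero (hA.hasZeroLineSums_sub hB), ashl_eq_zero_of_mem_pairSpan⟩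
end

section
/- There exist two distinct 4 × 4 × 4 alternating sign hypermatrices A and B with L(A) = L(B); consequently 4 is the minimum dimension n for which two distinct n × n × n ASHMs can have the same corresponding ASHL. -/
open Finset

/-!
For `n ≤ 3` the `-1` entries of an alternating line are interior, so they can only occur in the
middle position of a line of length `3`. Hence off the middle slice (`i = 1` in `Fin 3`) every
vertical line is a unit vector `e_k`, which is recovered from its weighted sum `k`. The middle
slice is then recovered from the column sums, since every alternating line sums to `1`. For
`n = 4` an explicit pair is checked by computation.
-/

lemma sum_eq_sum_nonzeroList {n : ℕ} (f : Fin n → ℤ) : ∑ i, f i = (nonzeroList f).sum := by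
  rw [nonzeroList, List.sum_filter_bne_zero, Fin.sum_univ_def]

namespace AltLine

variable {n : ℕ} {f g : Fin n → ℤ}

lemma eq_neg_one_or_eq_zero_or_eq_one (hf : AltLine f) (i : Fin n) :
    f i = -1 ∨ f i = 0 ∨ f i = 1 := by
  by_cases h0 : f i = 0
  · exact Or.inr (Or.inl h0)
  have hmem : f i ∈ nonzeroList f :=
    List.mem_filter.mpr ⟨List.mem_map_of_mem (List.mem_finRange i), by simpa using h0⟩
  obtain ⟨⟨m, hm⟩, hget⟩ := List.mem_iff_get.mp hmem
  rw [← hget, hf.2.1 m hm]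
  rcases Nat.even_or_odd m with he | ho
  · simp [he.neg_one_pow]
  · simp [ho.neg_one_pow]

/-- The alternating list `1, -1, …, 1` has odd length, hence sum `1`. -/
lemma sum_eq_one_s14 (hf : AltLine f) : ∑ i, f i = 1 := by
  obtain ⟨hne, hget, hlast⟩ := hf
  set l := nonzeroList f
  have hlen : l.length - 1 < l.length := Nat.sub_lt (List.length_pos_iff.mpr hne) one_pos
  have hodd : ¬ Even l.length := by
    intro heven
    have h1 : l.get ⟨_, hlen⟩ = 1 := by
      simpa [List.getLast?_eq_getElem?, hlen] using hlast
    rw [hget, (Nat.Even.sub_odd (List.length_pos_iff.mpr hne) heven odd_one).neg_one_pow] at h1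
    norm_num at h1
  calc ∑ i, f i = ∑ i : Fin l.length, l.get i := by
        rw [sum_eq_sum_nonzeroList, ← List.sum_ofFn, List.ofFn_get]
    _ = ∑ i ∈ range l.length, (-1 : ℤ) ^ i := by
        rw [← Fin.sum_univ_eq_sum_range]
        exact sum_congr rfl fun i _ => hget i i.2
    _ = 1 := by rw [neg_one_geom_sum, if_neg hodd]

lemma apply_zero_ne_neg_one {m : ℕ} {f : Fin (m + 1) → ℤ} (hf : AltLine f) : f 0 ≠ -1 := by
  intro h0
  have hhead : nonzeroList f = f 0 :: ((List.finRange m).map (f ∘ Fin.succ)).filter (· != 0) := by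
    rw [nonzeroList, List.finRange_succ, List.map_cons, List.filter_cons_of_pos (by simp [h0]),
      List.map_map]
  have := hf.2.1 0 (by simp [hhead])
  simp [hhead, h0] at this

lemma apply_last_ne_neg_one {m : ℕ} {f : Fin (m + 1) → ℤ} (hf : AltLine f) :
    f (Fin.last m) ≠ -1 := by
  intro hl
  have hlast : (nonzeroList f).getLast? = some (f (Fin.last m)) := by
    rw [nonzeroList, List.finRange_succ_last, List.map_append, List.filter_append]
    simp [hl]
  have := hf.2.2
  rw [hlast, hl] at this
  simp at this

lemma val_eq_one_of_eq_neg_one (hf : AltLine f) (hn : n ≤ 3) {i : Fin n} (hi : f i = -1) :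
    (i : ℕ) = 1 := by
  obtain ⟨m, rfl⟩ := Nat.exists_eq_add_one_of_ne_zero i.pos.ne'
  have h0 : i ≠ 0 := by rintro rfl; exact hf.apply_zero_ne_neg_one hi
  have hl : i ≠ Fin.last m := by rintro rfl; exact hf.apply_last_ne_neg_one hi
  rw [Ne, Fin.ext_iff] at h0 hl
  simp only [Fin.val_zero, Fin.val_last] at h0 hl
  omega

lemma exists_eq_pi_single_of_nonneg (hf : AltLine f) (hf₀ : ∀ i, 0 ≤ f i) :
    ∃ k, f = Pi.single k 1 := by
  obtain ⟨k, -, hk⟩ := Finset.exists_ne_zero_of_sum_ne_zero (hf.sum_eq_one_s14.trans_ne one_ne_zero)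
  have hk₁ : f k = 1 := by
    have := hf₀ k
    rcases hf.eq_neg_one_or_eq_zero_or_eq_one k with h | h | h <;> omega
  have hrest : ∑ i ∈ univ.erase k, f i = 0 := by
    have := hf.sum_eq_one_s14
    rw [← add_sum_erase _ _ (mem_univ k), hk₁] at this
    omega
  rw [sum_eq_zero_iff_of_nonneg fun i _ => hf₀ i] at hrest
  refine ⟨k, funext fun i => ?_⟩
  by_cases hik : i = k
  · simp [hik, hk₁]
  · simp [hik, hrest i (mem_erase.mpr ⟨hik, mem_univ i⟩)]

lemma eq_of_nonneg_of_weighted_sum_eq (hf : AltLine f) (hg : AltLine g) (hf₀ : ∀ i, 0 ≤ f i)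
    (hg₀ : ∀ i, 0 ≤ g i)
    (hsum : ∑ k : Fin n, ((k : ℕ) + 1 : ℤ) * f k = ∑ k : Fin n, ((k : ℕ) + 1 : ℤ) * g k) :
    f = g := by
  obtain ⟨k, rfl⟩ := hf.exists_eq_pi_single_of_nonneg hf₀
  obtain ⟨l, rfl⟩ := hg.exists_eq_pi_single_of_nonneg hg₀
  simp only [Pi.single_apply, mul_ite, mul_one, mul_zero, sum_ite_eq', mem_univ, ↓reduceIte,
    add_left_inj, Nat.cast_inj] at hsum
  rw [Fin.ext hsum]

end AltLine

namespace IsASHM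

variable {n : ℕ} {A B : Fin n → Fin n → Fin n → ℤ}

lemma nonneg_of_val_ne_one (hA : IsASHM A) (hn : n ≤ 3) {i : Fin n} (hi : (i : ℕ) ≠ 1)
    (j k : Fin n) : 0 ≤ A i j k := by
  rcases (hA.1 j k).eq_neg_one_or_eq_zero_or_eq_one i with h | h | h
  · exact absurd ((hA.1 j k).val_eq_one_of_eq_neg_one hn h) hi
  all_goals omega

theorem eq_of_ashl_eq (hn : n ≤ 3) (hA : IsASHM A) (hB : IsASHM B) (hL : ashl A = ashl B) :
    A = B := by
  have hslice : ∀ i : Fin n, (i : ℕ) ≠ 1 → A i = B i := fun i hi => funext fun j =>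
    (hA.2.2 i j).eq_of_nonneg_of_weighted_sum_eq (hB.2.2 i j) (hA.nonneg_of_val_ne_one hn hi j)
      (hB.nonneg_of_val_ne_one hn hi j) (congrFun (congrFun hL i) j)
  funext i j k
  by_cases hi : (i : ℕ) = 1
  · have hrest : ∑ i' ∈ univ.erase i, A i' j k = ∑ i' ∈ univ.erase i, B i' j k :=
      sum_congr rfl fun i' hi' => by
        rw [hslice i' fun h => ne_of_mem_erase hi' (Fin.ext (h.trans hi.symm))]
    have hAsum := (hA.1 j k).sum_eq_one_s14
    have hBsum := (hB.1 j k).sum_eq_one_s14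
    rw [← add_sum_erase _ _ (mem_univ i)] at hAsum hBsum
    linarith
  · rw [hslice i hi]

end IsASHM

instance {n : ℕ} (f : Fin n → ℤ) : Decidable (AltLine f) :=
  inferInstanceAs (Decidable (_ ∧ _ ∧ _))

instance {n : ℕ} (A : Fin n → Fin n → Fin n → ℤ) : Decidable (IsASHM A) :=
  inferInstanceAs (Decidable (_ ∧ _ ∧ _))

/-- Listed plane by plane, bottom (`k = 1`) to top, each plane by its rows `i`. -/
def ashmA : Fin 4 → Fin 4 → Fin 4 → ℤ := fun i j k =>
  ![![![0,0,0,1],![0,0,1,0],![0,1,0,0],![1,0,0,0]],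
    ![![0,0,1,0],![0,1,-1,1],![1,-1,1,0],![0,1,0,0]],
    ![![0,1,0,0],![1,0,0,0],![0,0,0,1],![0,0,1,0]],
    ![![1,0,0,0],![0,0,1,0],![0,1,0,0],![0,0,0,1]]] k i j

def ashmB : Fin 4 → Fin 4 → Fin 4 → ℤ := fun i j k =>
  ![![![0,0,0,1],![0,1,0,0],![0,0,1,0],![1,0,0,0]],
    ![![0,0,1,0],![0,0,0,1],![1,0,0,0],![0,1,0,0]],
    ![![0,1,0,0],![1,-1,1,0],![0,1,-1,1],![0,0,1,0]],
    ![![1,0,0,0],![0,1,0,0],![0,0,1,0],![0,0,0,1]]] k i j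

lemma isASHM_ashmA : IsASHM ashmA := by decide

lemma isASHM_ashmB : IsASHM ashmB := by decide

lemma ashmA_ne_ashmB : ashmA ≠ ashmB := by decide

lemma ashl_ashmA_eq_ashl_ashmB : ashl ashmA = ashl ashmB := by decide

theorem min_dimension_for_shared_ashl :
    (∃ A B : Fin 4 → Fin 4 → Fin 4 → ℤ,
      IsASHM A ∧ IsASHM B ∧ A ≠ B ∧ ashl A = ashl B) ∧
    (∀ n : ℕ, n < 4 → ∀ A B : Fin n → Fin n → Fin n → ℤ,
      IsASHM A → IsASHM B → ashl A = ashl B → A = B) :=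
  ⟨⟨ashmA, ashmB, isASHM_ashmA, isASHM_ashmB, ashmA_ne_ashmB, ashl_ashmA_eq_ashl_ashmB⟩,
    fun _ hn _ _ hA hB hL => IsASHM.eq_of_ashl_eq (by omega) hA hB hL⟩
end
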